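/- Let k ≥ 2 be an integer and i an integer with 0 ≤ i ≤ 2k, and let F(z) = φ^{4k−2i}(z) φ^{2i}(3z). Then the limit as Im(z) → ∞ of (4z+1)^{−2k} F(z/(4z+1)) equals (−1)^{i}/3^{i}. That is, the first term of the Fourier series expansion of F at the cusp 1/4 is (−4z−1)^{2k} · (−1)^{i}/3^{i}. -/

import Mathlib

/-!
With `c = 4z + 1` we have `z/c = 1/4 - 1/(4c)` and `3z/c = 3/4 - 1/(4(c/3))`. Since
`exp(2πi n² j/4)` only depends on the parity of `n`, `φ(j/4 + w) = iʲ φ(w) + (1 - iʲ) φ(4w)`.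
At `w = -1/(4c)` the inversion formula `θ(-1/τ) = (-iτ)^{1/2} θ(τ)` for Jacobi's
`θ(τ) = φ(τ/2)` turns `φ(w)` and `φ(4w)` into `√c` times theta values tending to `1`, so
`φ(j/4 - 1/(4c))² / c → (-i/2)(1 + iʲ)²`, which is `1` for `j = 1` and `-1` for `j = 3`.
The factor `c^{2k}` splits evenly between the squared pieces.
-/

open Complex UpperHalfPlane Filter

/-- Ramanujan's theta function `φ(z) = ∑_{n ∈ ℤ} q^{n²}`. -/
noncomputable def phi (z : ℂ) : ℂ :=
  ∑' n : ℤ, Complex.exp (2 * Real.pi * Complex.I * (n : ℂ) ^ 2 * z)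

open scoped Real Topology

lemma phi_eq_jacobiTheta (z : ℂ) : phi z = jacobiTheta (2 * z) :=
  tsum_congr fun n => by ring_nf

lemma summable_phi_term {z : ℂ} (hz : 0 < z.im) :
    Summable fun n : ℤ => cexp (2 * π * Complex.I * n ^ 2 * z) := by
  refine (hasSum_jacobiTheta₂_term 0 (by simpa using hz : 0 < (2 * z).im)).summable.congr
    fun n => ?_
  simp only [jacobiTheta₂_term, mul_zero, zero_add]
  ring_nf

lemma tsum_indicator_even {M : Type*} [AddCommMonoid M] [TopologicalSpace M] (f : ℤ → M) :
    ∑' n, {n : ℤ | Even n}.indicator f n = ∑' m : ℤ, f (2 * m) := by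
  have hsupp : Function.support ({n : ℤ | Even n}.indicator f) ⊆ Set.range (2 * ·) :=
    fun n hn => by
      have hn : n ∈ {n : ℤ | Even n} := Set.support_indicator_subset hn
      obtain ⟨m, rfl⟩ := hn
      exact ⟨m, two_mul m⟩
  rw [← (mul_right_injective₀ two_ne_zero).tsum_eq hsupp]
  simp

lemma exp_two_pi_I_sq_mul_quarter (j n : ℤ) :
    cexp (2 * π * Complex.I * n ^ 2 * (j / 4)) = if Even n then 1 else Complex.I ^ j := by
  rcases Int.even_or_odd' n with ⟨m, rfl | rfl⟩
  · rw [if_pos (even_two_mul m), ← exp_int_mul_two_pi_mul_I (m ^ 2 * j)]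
    push_cast
    ring_nf
  · have h : 2 * π * Complex.I * ((2 * m + 1 : ℤ) : ℂ) ^ 2 * (j / 4)
        = ((m ^ 2 + m) * j : ℤ) * (2 * π * Complex.I) + j * (π / 2 * Complex.I) := by
      push_cast
      ring
    rw [if_neg (Int.not_even_iff_odd.2 (odd_two_mul_add_one m)), h, exp_add,
      exp_int_mul_two_pi_mul_I, one_mul, exp_int_mul, exp_pi_div_two_mul_I]

lemma phi_quarter_add (j : ℤ) {w : ℂ} (hw : 0 < w.im) :
    phi (j / 4 + w) = Complex.I ^ j * phi w + (1 - Complex.I ^ j) * phi (4 * w) := by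
  set e : ℤ → ℂ := fun n => cexp (2 * π * Complex.I * n ^ 2 * w)
  have he : Summable e := summable_phi_term hw
  have hterm : ∀ n : ℤ, cexp (2 * π * Complex.I * n ^ 2 * (j / 4 + w))
      = Complex.I ^ j * e n + (1 - Complex.I ^ j) * {n : ℤ | Even n}.indicator e n := by
    intro n
    rw [mul_add, exp_add, exp_two_pi_I_sq_mul_quarter]
    by_cases hn : Even n
    · simp only [hn, ↓reduceIte, one_mul, Set.mem_ofPred_eq, Set.indicator_of_mem, e]
      ring
    · simp [hn, e]
  have heven : ∑' m : ℤ, e (2 * m) = phi (4 * w) :=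
    tsum_congr fun m => by simp only [e]; push_cast; ring_nf
  rw [phi, tsum_congr hterm, (he.mul_left _).tsum_add ((he.indicator _).mul_left _),
    tsum_mul_left, tsum_mul_left, tsum_indicator_even, heven]
  rfl

lemma ofReal_mul_cpow {r : ℝ} (hr : 0 < r) {x : ℂ} (hx : x ≠ 0) (y : ℂ) :
    ((r : ℂ) * x) ^ y = (r : ℂ) ^ y * x ^ y := by
  have hr' : (r : ℂ) ≠ 0 := ofReal_ne_zero.2 hr.ne'
  rw [cpow_def_of_ne_zero (mul_ne_zero hr' hx), log_ofReal_mul hr hx, ofReal_log hr.le,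
    add_mul, exp_add, ← cpow_def_of_ne_zero hr', ← cpow_def_of_ne_zero hx]

lemma four_cpow_one_half : (4 : ℂ) ^ (1 / 2 : ℂ) = 2 := by
  have h := pow_cpow_nat_inv (x := 2) (n := 2) two_ne_zero (by simp; positivity)
    (by simp; positivity)
  norm_num at h ⊢
  exact h

lemma jacobiTheta_neg_one_div {τ : ℂ} (hτ : 0 < τ.im) :
    jacobiTheta (-1 / τ) = (-Complex.I * τ) ^ (1 / 2 : ℂ) * jacobiTheta τ := by
  have h := jacobiTheta_S_smul ⟨τ, hτ⟩
  rw [UpperHalfPlane.modular_S_smul] at h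
  rwa [neg_div, one_div, ← inv_neg]

lemma phi_neg_one_div_four_mul {t : ℂ} (ht : 0 < t.im) :
    phi (-1 / (4 * t)) = (-Complex.I * (2 * t)) ^ (1 / 2 : ℂ) * jacobiTheta (2 * t) := by
  have ht0 : t ≠ 0 := by rintro rfl; simp at ht
  rw [phi_eq_jacobiTheta, ← jacobiTheta_neg_one_div (by simpa using ht)]
  congr 1
  field_simp
  ring

lemma phi_quarter_sub_one_div_sq (j : ℤ) {c : ℂ} (hc : 0 < c.im) :
    phi (j / 4 - 1 / (4 * c)) ^ 2 = -Complex.I * c / 2 * ((1 - Complex.I ^ j) *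
      jacobiTheta (c / 2) + 2 * Complex.I ^ j * jacobiTheta (2 * c)) ^ 2 := by
  have hc0 : c ≠ 0 := by rintro rfl; simp at hc
  have hw : 0 < (-1 / (4 * c)).im := by
    rw [neg_div, one_div, neg_im, inv_im, neg_div, neg_neg]
    exact div_pos (by simpa using hc) (normSq_pos.2 (by simpa using hc0))
  set x := -Complex.I * (c / 2)
  have hx : x ≠ 0 := by simp [x, hc0]
  have hsq : (x ^ (1 / 2 : ℂ)) ^ 2 = -Complex.I * c / 2 := by
    rw [one_div, cpow_ofNat_inv_pow]
    ring
  -- `(4x)^{1/2} = 2 x^{1/2}` fixes the relative sign of the two square roots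
  have hdouble : (-Complex.I * (2 * c)) ^ (1 / 2 : ℂ) = 2 * x ^ (1 / 2 : ℂ) := by
    rw [show -Complex.I * (2 * c) = ((4 : ℝ) : ℂ) * x by push_cast; ring,
      ofReal_mul_cpow four_pos hx, ofReal_ofNat, four_cpow_one_half]
  rw [sub_eq_add_neg, ← neg_div, phi_quarter_add j hw, phi_neg_one_div_four_mul hc,
    show 4 * (-1 / (4 * c)) = -1 / (4 * (c / 4)) by field_simp,
    phi_neg_one_div_four_mul (by simpa using hc), show 2 * (c / 4) = c / 2 by ring, hdouble]
  linear_combination ((1 - Complex.I ^ j) * jacobiTheta (c / 2)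
    + 2 * Complex.I ^ j * jacobiTheta (2 * c)) ^ 2 * hsq

lemma tendsto_jacobiTheta_comap_im_atTop :
    Tendsto jacobiTheta (comap Complex.im atTop) (𝓝 1) := by
  have hdecay : Tendsto (fun τ : ℂ => Real.exp (-π * τ.im)) (comap Complex.im atTop) (𝓝 0) :=
    Real.tendsto_exp_atBot.comp
      (tendsto_comap.const_mul_atTop_of_neg (by simpa using Real.pi_pos))
  simpa using (isBigO_at_im_infty_jacobiTheta_sub_one.trans_tendsto hdecay).add_const 1

lemma tendsto_phi_quarter_sub_one_div_sq_div (j : ℤ) :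
    Tendsto (fun c => phi (j / 4 - 1 / (4 * c)) ^ 2 / c) (comap Complex.im atTop)
      (𝓝 (-Complex.I / 2 * (1 + Complex.I ^ j) ^ 2)) := by
  have hhalf : Tendsto (fun c : ℂ => jacobiTheta (c / 2)) (comap Complex.im atTop) (𝓝 1) :=
    tendsto_jacobiTheta_comap_im_atTop.comp <| tendsto_comap_iff.2 <| by
      simpa [Function.comp_def] using tendsto_comap.atTop_div_const two_pos
  have htwice : Tendsto (fun c : ℂ => jacobiTheta (2 * c)) (comap Complex.im atTop) (𝓝 1) :=
    tendsto_jacobiTheta_comap_im_atTop.comp <| tendsto_comap_iff.2 <| by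
      simpa [Function.comp_def] using tendsto_comap.const_mul_atTop two_pos
  have hlim := (((hhalf.const_mul (1 - Complex.I ^ j)).add
    (htwice.const_mul (2 * Complex.I ^ j))).pow 2).const_mul (-Complex.I / 2)
  have heq : (fun c => -Complex.I / 2 * ((1 - Complex.I ^ j) * jacobiTheta (c / 2)
      + 2 * Complex.I ^ j * jacobiTheta (2 * c)) ^ 2)
      =ᶠ[comap Complex.im atTop] fun c => phi (j / 4 - 1 / (4 * c)) ^ 2 / c := by
    filter_upwards [tendsto_comap.eventually_gt_atTop 0] with c hc
    have hc0 : c ≠ 0 := by rintro rfl; simp at hc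
    rw [phi_quarter_sub_one_div_sq j hc]
    field_simp
  convert hlim.congr' heq using 2
  ring

theorem phi_pow_first_term_at_cusp_14_general (k i : ℕ) (hi : i ≤ 2 * k) :
    Filter.Tendsto (fun z : UpperHalfPlane =>
        (((4 : ℂ) * (z : ℂ) + 1) ^ (2 * k))⁻¹ *
          (phi ((z : ℂ) / ((4 : ℂ) * (z : ℂ) + 1)) ^ (4 * k - 2 * i) *
            phi (3 * ((z : ℂ) / ((4 : ℂ) * (z : ℂ) + 1))) ^ (2 * i)))
      UpperHalfPlane.atImInfty
      (nhds ((-1 : ℂ) ^ i / 3 ^ i)) := by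
  have hc : Tendsto (fun z : ℍ => 4 * (z : ℂ) + 1) atImInfty (comap Complex.im atTop) :=
    tendsto_comap_iff.2 <| by
      simpa [Function.comp_def] using
        (tendsto_comap_iff.1 tendsto_coe_atImInfty).const_mul_atTop four_pos
  have hc3 : Tendsto (fun z : ℍ => (4 * (z : ℂ) + 1) / 3) atImInfty (comap Complex.im atTop) :=
    tendsto_comap_iff.2 <| by
      simpa [Function.comp_def] using (tendsto_comap_iff.1 hc).atTop_div_const three_pos
  have h1 := (tendsto_phi_quarter_sub_one_div_sq_div 1).comp hc
  have h3 := ((tendsto_phi_quarter_sub_one_div_sq_div 3).comp hc3).div_const 3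
  obtain ⟨m, hm⟩ : ∃ m, 2 * k = m + i := ⟨2 * k - i, by omega⟩
  rw [show 4 * k - 2 * i = 2 * m by omega, hm]
  convert (h1.pow m).mul (h3.pow i) using 2 with z
  · rw [Function.comp_apply, Function.comp_apply]
    set c : ℂ := 4 * z + 1
    have hc0 : c ≠ 0 := fun h => z.im_pos.ne' (by simpa [c] using congrArg Complex.im h)
    have hz1 : (z : ℂ) / c = ((1 : ℤ) : ℂ) / 4 - 1 / (4 * c) := by field_simp; ring
    have hz3 : 3 * ((z : ℂ) / c) = ((3 : ℤ) : ℂ) / 4 - 1 / (4 * (c / 3)) := by field_simp; ring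
    rw [hz3, hz1, div_div, div_mul_cancel₀ _ three_ne_zero]
    ring
  · have e1 : -Complex.I / 2 * (1 + Complex.I ^ (1 : ℤ)) ^ 2 = 1 := by
      norm_num [Complex.ext_iff, pow_succ]
    have e3 : -Complex.I / 2 * (1 + Complex.I ^ (3 : ℤ)) ^ 2 / 3 = -1 / 3 := by
      norm_num [Complex.ext_iff, pow_succ]
    rw [e1, e3, one_pow, one_mul, div_pow]

/-- The first term of the Fourier expansion of `F(z) = φ^{4k−2i}(z) φ^{2i}(3z)` at the
cusp `1/4`. -/
theorem phi_pow_first_term_at_cusp_14 (k i : ℕ) (hk : 2 ≤ k) (hi : i ≤ 2 * k) :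
    Filter.Tendsto (fun z : UpperHalfPlane =>
        (((4 : ℂ) * (z : ℂ) + 1) ^ (2 * k))⁻¹ *
          (phi ((z : ℂ) / ((4 : ℂ) * (z : ℂ) + 1)) ^ (4 * k - 2 * i) *
            phi (3 * ((z : ℂ) / ((4 : ℂ) * (z : ℂ) + 1))) ^ (2 * i)))
      UpperHalfPlane.atImInfty
      (nhds ((-1 : ℂ) ^ i / 3 ^ i)) :=
  phi_pow_first_term_at_cusp_14_general k i hi
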